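/- arXiv:1603.02385 — 10 statements merged into one kernel-verified Lean document; each statement's English description precedes it below -/
import Mathlib

section
/- For nonempty relations R, S ⊆ X × Y between compact metric spaces, |dis(R) − dis(S)| ≤ 4·δ_H(R,S), where δ_H is the Hausdorff distance induced by the sup product metric on X × Y and dis(R) := sup over (x,y),(x',y') ∈ R of |d_X(x,x') − d_Y(y,y')|. -/
open Metric GromovHausdorff Set

variable {X Y : Type*} [MetricSpace X] [MetricSpace Y]

/-- A correspondence between `X` and `Y`: a relation surjective onto both factors. -/
def IsCorrespondence (R : Set (X × Y)) : Prop :=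
  (∀ x : X, ∃ y : Y, (x, y) ∈ R) ∧ (∀ y : Y, ∃ x : X, (x, y) ∈ R)

/-- The distortion of a relation `R ⊆ X × Y`. -/
noncomputable def dis (R : Set (X × Y)) : ℝ :=
  sSup ((fun pq : (X × Y) × (X × Y) => |dist pq.1.1 pq.2.1 - dist pq.1.2 pq.2.2|) '' (R ×ˢ R))

/-! Every pair of points of `R` lies within `δ_H(R, S) + ε` of a pair of points of `S`, and moving
both points of a pair by at most `r` in the sup metric changes `|d_X - d_Y|` by at most `4 r`.
Hence `dis R ≤ dis S + 4 δ_H(R, S)`, and symmetrically. -/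

lemma Prod.dist_fst_le {α β : Type*} [PseudoMetricSpace α] [PseudoMetricSpace β]
    (p q : α × β) : dist p.1 q.1 ≤ dist p q :=
  (le_max_left _ _).trans_eq Prod.dist_eq.symm

lemma Prod.dist_snd_le {α β : Type*} [PseudoMetricSpace α] [PseudoMetricSpace β]
    (p q : α × β) : dist p.2 q.2 ≤ dist p q :=
  (le_max_right _ _).trans_eq Prod.dist_eq.symm

def disPair (p q : X × Y) : ℝ :=
  |dist p.1 q.1 - dist p.2 q.2|

lemma disPair_le_two_mul_dist (p q : X × Y) : disPair p q ≤ 2 * dist p q := by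
  have h₁ := Prod.dist_fst_le p q
  have h₂ := Prod.dist_snd_le p q
  rw [disPair, abs_le]
  constructor <;> linarith [dist_nonneg (x := p.1) (y := q.1), dist_nonneg (x := p.2) (y := q.2)]

lemma disPair_le_disPair_add (p q p' q' : X × Y) :
    disPair p q ≤ disPair p' q' + 2 * (dist p p' + dist q q') := by
  have h₁ : |dist p.1 q.1 - dist p'.1 q'.1| ≤ dist p p' + dist q q' :=
    (dist_dist_dist_le _ _ _ _).trans <|
      add_le_add (Prod.dist_fst_le p p') (Prod.dist_fst_le q q')
  have h₂ : |dist p.2 q.2 - dist p'.2 q'.2| ≤ dist p p' + dist q q' :=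
    (dist_dist_dist_le _ _ _ _).trans <|
      add_le_add (Prod.dist_snd_le p p') (Prod.dist_snd_le q q')
  rw [disPair, disPair, abs_le]
  rw [abs_le] at h₁ h₂
  constructor <;> linarith [le_abs_self (dist p'.1 q'.1 - dist p'.2 q'.2),
    neg_abs_le (dist p'.1 q'.1 - dist p'.2 q'.2)]

lemma dis_eq_sSup_disPair (R : Set (X × Y)) :
    dis R = sSup ((fun pq => disPair pq.1 pq.2) '' R ×ˢ R) :=
  rfl

lemma bddAbove_disPair_image {R : Set (X × Y)} (hR : Bornology.IsBounded R) :
    BddAbove ((fun pq => disPair pq.1 pq.2) '' R ×ˢ R) := by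
  refine ⟨2 * diam R, ?_⟩
  rintro _ ⟨⟨p, q⟩, ⟨hp, hq⟩, rfl⟩
  exact (disPair_le_two_mul_dist p q).trans <| by gcongr; exact dist_le_diam_of_mem hR hp hq

lemma disPair_le_dis {R : Set (X × Y)} (hR : Bornology.IsBounded R) {p q : X × Y}
    (hp : p ∈ R) (hq : q ∈ R) : disPair p q ≤ dis R :=
  le_csSup (bddAbove_disPair_image hR) ⟨(p, q), ⟨hp, hq⟩, rfl⟩

lemma dis_le_dis_add_four_mul_hausdorffDist {R S : Set (X × Y)} (hR : R.Nonempty)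
    (hS : S.Nonempty) (hRb : Bornology.IsBounded R) (hSb : Bornology.IsBounded S) :
    dis R ≤ dis S + 4 * hausdorffDist R S := by
  have hfin := hausdorffEDist_ne_top_of_nonempty_of_bounded hR hS hRb hSb
  rw [dis_eq_sSup_disPair]
  refine csSup_le ((hR.prod hR).image _) ?_
  rintro _ ⟨⟨p, q⟩, ⟨hp, hq⟩, rfl⟩
  refine le_of_forall_pos_le_add fun ε hε => ?_
  have hlt : hausdorffDist R S < hausdorffDist R S + ε / 4 := by linarith
  obtain ⟨p', hp', hpp'⟩ := exists_dist_lt_of_hausdorffDist_lt hp hlt hfin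
  obtain ⟨q', hq', hqq'⟩ := exists_dist_lt_of_hausdorffDist_lt hq hlt hfin
  linarith [disPair_le_disPair_add p q p' q', disPair_le_dis hSb hp' hq']

theorem abs_dis_sub_dis_le_four_hausdorffDist {X Y : Type*} [MetricSpace X] [MetricSpace Y]
    [CompactSpace X] [CompactSpace Y] (R S : Set (X × Y)) (hR : R.Nonempty) (hS : S.Nonempty) :
    |dis R - dis S| ≤ 4 * hausdorffDist R S := by
  have hRS := dis_le_dis_add_four_mul_hausdorffDist hR hS (.all R) (.all S)
  have hSR := dis_le_dis_add_four_mul_hausdorffDist hS hR (.all S) (.all R)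
  rw [hausdorffDist_comm] at hSR
  rw [abs_sub_le_iff]
  constructor <;> linarith
end

section
/- The distortion function R ↦ dis(R) is Lipschitz continuous (with constant 4) on the space of nonempty closed subsets of X × Y equipped with the Hausdorff metric induced by the sup product metric. -/
open Metric GromovHausdorff Set

variable {X Y : Type*} [MetricSpace X] [MetricSpace Y]

private lemma dis_le_of_compact {X Y : Type*} [MetricSpace X] [MetricSpace Y]
    (K L : TopologicalSpace.NonemptyCompacts (X × Y)) :
    dis (K : Set (X × Y)) ≤ dis (L : Set (X × Y)) +
      4 * hausdorffDist (K : Set (X × Y)) (L : Set (X × Y)) := by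
  set f : (X × Y) × (X × Y) → ℝ :=
    fun pq => |dist pq.1.1 pq.2.1 - dist pq.1.2 pq.2.2| with hf
  have hcont : Continuous f := by fun_prop
  have hne : EMetric.hausdorffEdist (K : Set (X × Y)) (L : Set (X × Y)) ≠ ⊤ :=
    hausdorffEdist_ne_top_of_nonempty_of_bounded K.nonempty L.nonempty
      K.isCompact.isBounded L.isCompact.isBounded
  have hd0 : 0 ≤ hausdorffDist (K : Set (X × Y)) (L : Set (X × Y)) :=
    hausdorffDist_nonneg
  have hbddL : BddAbove (f '' ((L : Set (X × Y)) ×ˢ (L : Set (X × Y)))) :=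
    ((L.isCompact.prod L.isCompact).image hcont).bddAbove
  set hd := hausdorffDist (K : Set (X × Y)) (L : Set (X × Y)) with hhd
  have hdisL : 0 ≤ dis (L : Set (X × Y)) := Real.sSup_nonneg (by
    rintro r ⟨pq, _, rfl⟩; exact abs_nonneg _)
  refine le_of_forall_pos_le_add ?_
  intro ε hε
  have hεne : (0:ℝ) < ε / 8 := by positivity
  refine Real.sSup_le ?_ (by linarith)
  rintro r ⟨⟨p, q⟩, ⟨hp, hq⟩, rfl⟩
  -- find close points in L
  obtain ⟨p', hp', hpp'⟩ : ∃ p' ∈ (L : Set (X × Y)), dist p p' < hd + ε / 8 := by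
    rcases exists_dist_lt_of_hausdorffDist_lt hp (lt_add_of_pos_right hd hεne) hne with
      ⟨p', h1, h2⟩
    exact ⟨p', h1, h2⟩
  obtain ⟨q', hq', hqq'⟩ : ∃ q' ∈ (L : Set (X × Y)), dist q q' < hd + ε / 8 := by
    rcases exists_dist_lt_of_hausdorffDist_lt hq (lt_add_of_pos_right hd hεne) hne with
      ⟨q', h1, h2⟩
    exact ⟨q', h1, h2⟩
  have hfL : f (p', q') ≤ dis (L : Set (X × Y)) :=
    le_csSup hbddL ⟨(p', q'), ⟨hp', hq'⟩, rfl⟩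
  have h1 : |dist p.1 q.1 - dist p'.1 q'.1| ≤ dist p p' + dist q q' := by
    have := dist_dist_dist_le p.1 q.1 p'.1 q'.1
    rw [Real.dist_eq] at this
    refine this.trans (add_le_add ?_ ?_) <;>
      · rw [Prod.dist_eq]; exact le_max_left _ _
  have h2 : |dist p.2 q.2 - dist p'.2 q'.2| ≤ dist p p' + dist q q' := by
    have := dist_dist_dist_le p.2 q.2 p'.2 q'.2
    rw [Real.dist_eq] at this
    refine this.trans (add_le_add ?_ ?_) <;>
      · rw [Prod.dist_eq]; exact le_max_right _ _
  have key : f (p, q) ≤ f (p', q') + 2 * (dist p p' + dist q q') := by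
    simp only [hf]
    have habs := abs_sub (dist p.1 q.1 - dist p'.1 q'.1) (dist p.2 q.2 - dist p'.2 q'.2)
    have : |dist p.1 q.1 - dist p.2 q.2| ≤
        |dist p'.1 q'.1 - dist p'.2 q'.2| +
          (|dist p.1 q.1 - dist p'.1 q'.1| + |dist p.2 q.2 - dist p'.2 q'.2|) := by
      have := abs_sub_abs_le_abs_sub (dist p.1 q.1 - dist p.2 q.2)
        (dist p'.1 q'.1 - dist p'.2 q'.2)
      have h3 : |dist p.1 q.1 - dist p.2 q.2 - (dist p'.1 q'.1 - dist p'.2 q'.2)| ≤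
          |dist p.1 q.1 - dist p'.1 q'.1| + |dist p.2 q.2 - dist p'.2 q'.2| := by
        have h4 := abs_sub (dist p.1 q.1 - dist p'.1 q'.1) (dist p.2 q.2 - dist p'.2 q'.2)
        calc |dist p.1 q.1 - dist p.2 q.2 - (dist p'.1 q'.1 - dist p'.2 q'.2)|
            = |dist p.1 q.1 - dist p'.1 q'.1 - (dist p.2 q.2 - dist p'.2 q'.2)| := by
              ring_nf
          _ ≤ _ := abs_sub _ _
      linarith
    linarith
  have hp8 : dist p p' ≤ hd + ε / 8 := hpp'.le
  have hq8 : dist q q' ≤ hd + ε / 8 := hqq'.le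
  calc f (p, q) ≤ f (p', q') + 2 * (dist p p' + dist q q') := key
    _ ≤ dis (L : Set (X × Y)) + 2 * ((hd + ε / 8) + (hd + ε / 8)) := by
        have : dist p p' + dist q q' ≤ (hd + ε / 8) + (hd + ε / 8) := add_le_add hp8 hq8
        linarith
    _ ≤ dis (L : Set (X × Y)) + 4 * hd + ε := by linarith

theorem dis_lipschitzWith_four {X Y : Type*} [MetricSpace X] [MetricSpace Y]
    [CompactSpace X] [CompactSpace Y] :
    LipschitzWith 4
      (fun K : TopologicalSpace.NonemptyCompacts (X × Y) => dis (K : Set (X × Y))) := by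
  rw [lipschitzWith_iff_dist_le_mul]
  intro K L
  rw [Real.dist_eq]
  have hKL := dis_le_of_compact K L
  have hLK := dis_le_of_compact L K
  rw [hausdorffDist_comm] at hLK
  have hdist : dist K L = hausdorffDist (K : Set (X × Y)) (L : Set (X × Y)) :=
    Metric.NonemptyCompacts.dist_eq
  rw [abs_sub_le_iff]
  push_cast
  constructor <;> linarith [hdist ▸ hKL, hdist ▸ hLK]
end

section
/- For any two compact metric spaces X and Y, there exists a correspondence R ⊆ X × Y with dis(R) = 2·d_GH(X,Y); that is, the infimum of distortions over all correspondences is attained. -/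
open Metric GromovHausdorff Set

variable {X Y : Type*} [MetricSpace X] [MetricSpace Y]

/-- Any correspondence has distortion at least `2 * ghDist X Y`. -/
theorem two_ghDist_le_dis {X Y : Type*} [MetricSpace X] [MetricSpace Y]
    [CompactSpace X] [CompactSpace Y] [Nonempty X] [Nonempty Y]
    {R : Set (X × Y)} (hR : IsCorrespondence R)
    (hbdd : BddAbove ((fun pq : (X × Y) × (X × Y) =>
      |dist pq.1.1 pq.2.1 - dist pq.1.2 pq.2.2|) '' (R ×ˢ R))) :
    2 * ghDist X Y ≤ dis R := by
  obtain ⟨x₀⟩ := ‹Nonempty X›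
  obtain ⟨y₀, hxy₀⟩ := hR.1 x₀
  have hRne : R.Nonempty := ⟨(x₀, y₀), hxy₀⟩
  have hdis0 : 0 ≤ dis R := by
    have : |dist x₀ x₀ - dist y₀ y₀| ≤ dis R :=
      le_csSup hbdd ⟨((x₀, y₀), (x₀, y₀)), ⟨hxy₀, hxy₀⟩, rfl⟩
    simpa using this
  have key : ∀ δ : ℝ, 0 < δ → ghDist X Y ≤ dis R / 2 + δ := by
    intro δ hδ
    set ε : ℝ := dis R / 2 + δ with hε
    have hε0 : 0 < ε := by positivity
    haveI : Nonempty R := ⟨⟨(x₀, y₀), hxy₀⟩⟩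
    have H : ∀ p q : R, |dist (p.val.1) (q.val.1) - dist (p.val.2) (q.val.2)| ≤ 2 * ε := by
      intro p q
      have h1 : |dist (p.val.1) (q.val.1) - dist (p.val.2) (q.val.2)| ≤ dis R :=
        le_csSup hbdd ⟨(p.val, q.val), ⟨p.2, q.2⟩, rfl⟩
      have : dis R ≤ 2 * ε := by rw [hε]; linarith
      linarith
    letI m : MetricSpace (X ⊕ Y) :=
      glueMetricApprox (fun p : R => p.val.1) (fun p : R => p.val.2) ε hε0 H
    have hisol : Isometry (Sum.inl : X → X ⊕ Y) :=
      Isometry.of_dist_eq fun a b => rfl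
    have hisor : Isometry (Sum.inr : Y → X ⊕ Y) :=
      Isometry.of_dist_eq fun a b => rfl
    have hHD : hausdorffDist (range (Sum.inl : X → X ⊕ Y))
        (range (Sum.inr : Y → X ⊕ Y)) ≤ ε := by
      apply hausdorffDist_le_of_mem_dist hε0.le
      · rintro _ ⟨a, rfl⟩
        obtain ⟨b, hab⟩ := hR.1 a
        refine ⟨Sum.inr b, mem_range_self _, ?_⟩
        have := glueDist_glued_points (fun p : R => p.val.1) (fun p : R => p.val.2) ε
          ⟨(a, b), hab⟩
        exact le_of_eq this
      · rintro _ ⟨b, rfl⟩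
        obtain ⟨a, hab⟩ := hR.2 b
        refine ⟨Sum.inl a, mem_range_self _, ?_⟩
        have := glueDist_glued_points (fun p : R => p.val.1) (fun p : R => p.val.2) ε
          ⟨(a, b), hab⟩
        rw [dist_comm]
        exact le_of_eq this
    calc ghDist X Y ≤ hausdorffDist (range (Sum.inl : X → X ⊕ Y))
          (range (Sum.inr : Y → X ⊕ Y)) := ghDist_le_hausdorffDist hisol hisor
      _ ≤ ε := hHD
  have : ghDist X Y ≤ dis R / 2 := le_of_forall_pos_le_add fun δ hδ => key δ hδ
  linarith

theorem exists_optimal_correspondence {X Y : Type*} [MetricSpace X] [MetricSpace Y]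
    [CompactSpace X] [CompactSpace Y] [Nonempty X] [Nonempty Y] :
    ∃ R : Set (X × Y), IsCorrespondence R ∧ dis R = 2 * ghDist X Y := by
  set L := optimalGHInjl X Y with hL
  set Rr := optimalGHInjr X Y with hRr
  set g := ghDist X Y with hg
  have hg0 : 0 ≤ g := by rw [hg, ghDist]; exact dist_nonneg
  have hLiso : Isometry L := isometry_optimalGHInjl X Y
  have hRiso : Isometry Rr := isometry_optimalGHInjr X Y
  have hHD : hausdorffDist (range L) (range Rr) = g := hausdorffDist_optimal
  have hLc : IsCompact (range L) := isCompact_range hLiso.continuous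
  have hRc : IsCompact (range Rr) := isCompact_range hRiso.continuous
  have hfin : EMetric.hausdorffEdist (range L) (range Rr) ≠ ⊤ :=
    hausdorffEdist_ne_top_of_nonempty_of_bounded (range_nonempty _) (range_nonempty _)
      hLc.isBounded hRc.isBounded
  set R : Set (X × Y) := {p | dist (L p.1) (Rr p.2) ≤ g} with hRdef
  have hcorr : IsCorrespondence R := by
    constructor
    · intro x
      obtain ⟨z, ⟨y, rfl⟩, hz⟩ := hRc.exists_infDist_eq_dist (range_nonempty _) (L x)
      refine ⟨y, ?_⟩
      have h1 : infDist (L x) (range Rr) ≤ g := by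
        rw [← hHD]
        exact infDist_le_hausdorffDist_of_mem (mem_range_self x) hfin
      simpa [hRdef, ← hz] using h1
    · intro y
      obtain ⟨z, ⟨x, rfl⟩, hz⟩ := hLc.exists_infDist_eq_dist (range_nonempty _) (Rr y)
      refine ⟨x, ?_⟩
      have h1 : infDist (Rr y) (range L) ≤ g := by
        rw [← hHD, hausdorffDist_comm]
        exact infDist_le_hausdorffDist_of_mem (mem_range_self y)
          (by rwa [EMetric.hausdorffEdist_comm])
      have : dist (L x) (Rr y) ≤ g := by rw [dist_comm]; rwa [hz] at h1
      exact this
  have hub : ∀ a ∈ (fun pq : (X × Y) × (X × Y) =>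
      |dist pq.1.1 pq.2.1 - dist pq.1.2 pq.2.2|) '' (R ×ˢ R), a ≤ 2 * g := by
    rintro _ ⟨⟨p, q⟩, ⟨hp, hq⟩, rfl⟩
    have h1 : dist p.1 q.1 = dist (L p.1) (L q.1) := (hLiso.dist_eq _ _).symm
    have h2 : dist p.2 q.2 = dist (Rr p.2) (Rr q.2) := (hRiso.dist_eq _ _).symm
    have h3 : dist (dist (L p.1) (L q.1)) (dist (Rr p.2) (Rr q.2)) ≤
        dist (L p.1) (Rr p.2) + dist (L q.1) (Rr q.2) := dist_dist_dist_le _ _ _ _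
    rw [Real.dist_eq] at h3
    simp only [h1, h2]
    have hp' : dist (L p.1) (Rr p.2) ≤ g := hp
    have hq' : dist (L q.1) (Rr q.2) ≤ g := hq
    linarith
  have hbdd : BddAbove ((fun pq : (X × Y) × (X × Y) =>
      |dist pq.1.1 pq.2.1 - dist pq.1.2 pq.2.2|) '' (R ×ˢ R)) := ⟨2 * g, hub⟩
  refine ⟨R, hcorr, le_antisymm (Real.sSup_le hub (by linarith)) ?_⟩
  exact two_ghDist_le_dis hcorr hbdd
end

section
/- Let R be a correspondence between compact metric spaces X and Y, and for t ∈ (0,1) equip R with the metric d_t = (1−t)d_X + t d_Y. Then for all s, t ∈ (0,1), d_GH((R,d_s),(R,d_t)) ≤ (1/2)|t−s|·dis(R). -/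
open Metric GromovHausdorff Set

variable {X Y : Type*} [MetricSpace X] [MetricSpace Y]

/-- Type synonym for a relation `R ⊆ X × Y` carrying the interpolated metric `d_t`. -/
def Interp {X Y : Type*} (R : Set (X × Y)) (_t : ℝ) : Type _ := ↥R

/-- The convex-combination metric `d_t = (1-t)·d_X + t·d_Y` on a relation `R`, for `t ∈ (0,1)`. -/
noncomputable def interpMetric (R : Set (X × Y)) (t : ℝ) (ht : t ∈ Set.Ioo (0:ℝ) 1) :
    MetricSpace (Interp R t) where
  dist p q := (1 - t) * dist (p : ↥R).val.1 (q : ↥R).val.1 + t * dist (p : ↥R).val.2 (q : ↥R).val.2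
  dist_self p := by simp
  dist_comm p q := by simp [dist_comm]
  dist_triangle p q r := by
    change (1 - t) * dist (p : ↥R).val.1 (r : ↥R).val.1 + t * dist (p : ↥R).val.2 (r : ↥R).val.2
      ≤ ((1 - t) * dist (p : ↥R).val.1 (q : ↥R).val.1 + t * dist (p : ↥R).val.2 (q : ↥R).val.2)
      + ((1 - t) * dist (q : ↥R).val.1 (r : ↥R).val.1 + t * dist (q : ↥R).val.2 (r : ↥R).val.2)
    have h1 := dist_triangle (p : ↥R).val.1 (q : ↥R).val.1 (r : ↥R).val.1
    have h2 := dist_triangle (p : ↥R).val.2 (q : ↥R).val.2 (r : ↥R).val.2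
    nlinarith [ht.1.le, ht.2.le]
  eq_of_dist_eq_zero := by
    rintro ⟨⟨x, y⟩, hp⟩ ⟨⟨x', y'⟩, hq⟩ h
    change (1 - t) * dist x x' + t * dist y y' = 0 at h
    have d1 := @dist_nonneg X _ x x'
    have d2 := @dist_nonneg Y _ y y'
    have hx : dist x x' = 0 := by nlinarith [ht.1, ht.2]
    have hy : dist y y' = 0 := by nlinarith [ht.1, ht.2]
    exact Subtype.ext (Prod.ext (eq_of_dist_eq_zero hx) (eq_of_dist_eq_zero hy))

/-- `(R, d_t)` is nonempty whenever `R` is. -/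
theorem interpNonempty {X Y : Type*} {R : Set (X × Y)} (hR : R.Nonempty) (t : ℝ) :
    Nonempty (Interp R t) := hR.to_subtype

/-- `(R, d_t)` is compact when `R` is closed in `X × Y`. -/
theorem interpCompact [CompactSpace X] [CompactSpace Y] {R : Set (X × Y)}
    (hR : IsClosed R) {t : ℝ} (ht : t ∈ Set.Ioo (0:ℝ) 1) :
    @CompactSpace (Interp R t) (interpMetric R t ht).toUniformSpace.toTopologicalSpace := by
  haveI : CompactSpace ↥R := isCompact_iff_compactSpace.mp hR.isCompact
  letI m := interpMetric R t ht
  let f : ↥R → Interp R t := fun p => p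
  have hlip : LipschitzWith 1 f := by
    apply LipschitzWith.of_dist_le_mul
    intro p q
    have hd : dist (f p) (f q)
        = (1 - t) * dist p.val.1 q.val.1 + t * dist p.val.2 q.val.2 := rfl
    rw [hd, Subtype.dist_eq, Prod.dist_eq]
    simp only [NNReal.coe_one, one_mul]
    have h1 : dist p.val.1 q.val.1 ≤ max (dist p.val.1 q.val.1) (dist p.val.2 q.val.2) :=
      le_max_left _ _
    have h2 : dist p.val.2 q.val.2 ≤ max (dist p.val.1 q.val.1) (dist p.val.2 q.val.2) :=
      le_max_right _ _
    nlinarith [ht.1.le, ht.2.le]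
  constructor
  have hr : Set.range f = Set.univ := Set.range_eq_univ.mpr fun p => ⟨p, rfl⟩
  rw [← hr]
  exact isCompact_range hlip.continuous

theorem abs_sub_dist_le_dis {X Y : Type*} [MetricSpace X] [MetricSpace Y]
    [CompactSpace X] [CompactSpace Y] {R : Set (X × Y)} (hclosed : IsClosed R)
    {p q : X × Y} (hp : p ∈ R) (hq : q ∈ R) :
    |dist p.1 q.1 - dist p.2 q.2| ≤ dis R := by
  have hcR : IsCompact R := hclosed.isCompact
  have hcont : Continuous (fun pq : (X × Y) × (X × Y) =>
      |dist pq.1.1 pq.2.1 - dist pq.1.2 pq.2.2|) := by fun_prop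
  have hbdd : BddAbove ((fun pq : (X × Y) × (X × Y) =>
      |dist pq.1.1 pq.2.1 - dist pq.1.2 pq.2.2|) '' (R ×ˢ R)) :=
    ((hcR.prod hcR).image hcont).bddAbove
  exact le_csSup hbdd ⟨(p, q), ⟨hp, hq⟩, rfl⟩

theorem ghDist_interp_interp_le {X Y : Type*} [MetricSpace X] [MetricSpace Y]
    [CompactSpace X] [CompactSpace Y] (R : Set (X × Y)) (hcorr : IsCorrespondence R)
    (hclosed : IsClosed R) (hne : R.Nonempty) {s t : ℝ}
    (hs : s ∈ Set.Ioo (0:ℝ) 1) (ht : t ∈ Set.Ioo (0:ℝ) 1) :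
    @ghDist (Interp R s) (Interp R t)
      (interpMetric R s hs) (interpNonempty hne s) (interpCompact hclosed hs)
      (interpMetric R t ht) (interpNonempty hne t) (interpCompact hclosed ht)
      ≤ (1 / 2) * |t - s| * dis R := by
  letI ms := interpMetric R s hs
  letI mt := interpMetric R t ht
  haveI := interpNonempty hne s
  haveI := interpNonempty hne t
  haveI := interpCompact hclosed hs
  haveI := interpCompact hclosed ht
  have key : @ghDist (Interp R s) (Interp R t) ms _ _ mt _ _
      ≤ 0 + (|t - s| * dis R) / 2 + 0 := by
    refine ghDist_le_of_approx_subsets (s := (Set.univ : Set (Interp R s)))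
      (ε₁ := 0) (ε₂ := |t - s| * dis R) (ε₃ := 0)
      (fun p => show Interp R t from p.1)
      (fun x => ⟨x, mem_univ x, (dist_self x).le⟩)
      (fun x => ⟨⟨x, mem_univ x⟩, (dist_self x).le⟩) ?_
    rintro ⟨p, -⟩ ⟨q, -⟩
    show |@dist (Interp R s) ms.toDist p q
        - @dist (Interp R t) mt.toDist p q| ≤ |t - s| * dis R
    have hd1 : @dist (Interp R s) ms.toDist p q
        = (1 - s) * dist (show ↥R from p).val.1 (show ↥R from q).val.1
          + s * dist (show ↥R from p).val.2 (show ↥R from q).val.2 := rfl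
    have hd2 : @dist (Interp R t) mt.toDist p q
        = (1 - t) * dist (show ↥R from p).val.1 (show ↥R from q).val.1
          + t * dist (show ↥R from p).val.2 (show ↥R from q).val.2 := rfl
    rw [hd1, hd2]
    have hdis := abs_sub_dist_le_dis hclosed ((show ↥R from p).2) ((show ↥R from q).2)
    have heq : (1 - s) * dist (show ↥R from p).val.1 (show ↥R from q).val.1
          + s * dist (show ↥R from p).val.2 (show ↥R from q).val.2
        - ((1 - t) * dist (show ↥R from p).val.1 (show ↥R from q).val.1
          + t * dist (show ↥R from p).val.2 (show ↥R from q).val.2)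
        = (t - s) * (dist (show ↥R from p).val.1 (show ↥R from q).val.1
            - dist (show ↥R from p).val.2 (show ↥R from q).val.2) := by ring
    rw [heq, abs_mul]
    exact mul_le_mul_of_nonneg_left hdis (abs_nonneg _)
  linarith [key]
end

section
/- Let R be a correspondence between compact metric spaces X and Y, and for t ∈ (0,1) equip R with d_t = (1−t)d_X + t d_Y. Then d_GH(X, (R,d_t)) ≤ (t/2)·dis(R). -/
open Metric GromovHausdorff Set

variable {X Y : Type*} [MetricSpace X] [MetricSpace Y]

theorem ghDist_left_interp_le {X Y : Type*} [MetricSpace X] [MetricSpace Y]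
    [CompactSpace X] [CompactSpace Y] [Nonempty X] [Nonempty Y] (R : Set (X × Y))
    (hcorr : IsCorrespondence R) (hclosed : IsClosed R) (hne : R.Nonempty) {t : ℝ}
    (ht : t ∈ Set.Ioo (0:ℝ) 1) :
    @ghDist X (Interp R t) _ _ _
      (interpMetric R t ht) (interpNonempty hne t) (interpCompact hclosed ht)
      ≤ (t / 2) * dis R := by
  letI m := interpMetric R t ht
  haveI : Nonempty (Interp R t) := interpNonempty hne t
  haveI : CompactSpace (Interp R t) := interpCompact hclosed ht
  -- key bound on distortion elements
  have hdis : ∀ p q : ↥R, |dist p.val.1 q.val.1 - dist p.val.2 q.val.2| ≤ dis R := by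
    intro p q
    have hcpt : IsCompact ((fun pq : (X × Y) × (X × Y) =>
        |dist pq.1.1 pq.2.1 - dist pq.1.2 pq.2.2|) '' (R ×ˢ R)) := by
      apply IsCompact.image (hclosed.isCompact.prod hclosed.isCompact)
      fun_prop
    exact le_csSup hcpt.bddAbove ⟨(p.val, q.val), ⟨p.2, q.2⟩, rfl⟩
  have hdis0 : 0 ≤ dis R := by
    obtain ⟨p, hp⟩ := hne
    exact le_trans (abs_nonneg _) (hdis ⟨p, hp⟩ ⟨p, hp⟩)
  have key : ghDist (Interp R t) X ≤ 0 + t * dis R / 2 + 0 := by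
    apply ghDist_le_of_approx_subsets
      (s := (Set.univ : Set (Interp R t)))
      (fun p => (p.val : ↥R).val.1)
    · intro x; exact ⟨x, Set.mem_univ _, by simp⟩
    · intro x
      obtain ⟨y, hy⟩ := hcorr.1 x
      refine ⟨⟨(⟨(x, y), hy⟩ : ↥R), Set.mem_univ _⟩, by simp⟩
    · intro p q
      have hd : dist p.val q.val = (1 - t) * dist (p.val : ↥R).val.1 (q.val : ↥R).val.1
          + t * dist (p.val : ↥R).val.2 (q.val : ↥R).val.2 := rfl
      rw [show dist p q = dist (p : Interp R t) (q : Interp R t) from Subtype.dist_eq p q, hd]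
      have h := hdis (p.val : ↥R) (q.val : ↥R)
      rw [abs_sub_comm] at h
      rw [abs_le] at h ⊢
      constructor <;> nlinarith [ht.1.le, ht.2.le, h.1, h.2]
  have hsym : @ghDist X (Interp R t) _ _ _ m (interpNonempty hne t) (interpCompact hclosed ht)
      = ghDist (Interp R t) X := dist_comm _ _
  rw [hsym]
  linarith
end

section
/- Let R be a correspondence between compact metric spaces X and Y with d_t as above. Then d_GH((R,d_t), Y) ≤ ((1−t)/2)·dis(R) for t ∈ (0,1). -/
open Metric GromovHausdorff Set

variable {X Y : Type*} [MetricSpace X] [MetricSpace Y]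

theorem ghDist_interp_right_le {X Y : Type*} [MetricSpace X] [MetricSpace Y]
    [CompactSpace X] [CompactSpace Y] [Nonempty X] [Nonempty Y] (R : Set (X × Y))
    (hcorr : IsCorrespondence R) (hclosed : IsClosed R) (hne : R.Nonempty) {t : ℝ}
    (ht : t ∈ Set.Ioo (0:ℝ) 1) :
    @ghDist (Interp R t) Y
      (interpMetric R t ht) (interpNonempty hne t) (interpCompact hclosed ht) _ _ _
      ≤ ((1 - t) / 2) * dis R := by
  letI : MetricSpace (Interp R t) := interpMetric R t ht
  haveI : Nonempty (Interp R t) := interpNonempty hne t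
  haveI : CompactSpace (Interp R t) := interpCompact hclosed ht
  have hbdd : BddAbove ((fun pq : (X × Y) × (X × Y) =>
      |dist pq.1.1 pq.2.1 - dist pq.1.2 pq.2.2|) '' (R ×ˢ R)) := by
    have hc : IsCompact (R ×ˢ R) := hclosed.isCompact.prod hclosed.isCompact
    exact (hc.image (((continuous_fst.fst.dist continuous_snd.fst).sub
      (continuous_fst.snd.dist continuous_snd.snd)).abs)).bddAbove
  have hdis : ∀ p q : ↥R, |dist p.val.1 q.val.1 - dist p.val.2 q.val.2| ≤ dis R := fun p q =>
    le_csSup hbdd ⟨(p.val, q.val), ⟨p.2, q.2⟩, rfl⟩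
  have ht1 : (0:ℝ) ≤ 1 - t := by linarith [ht.2]
  let Φ : ↥(univ : Set (Interp R t)) → Y := fun p => ((p.val : Interp R t) : ↥R).val.2
  have key : ghDist (Interp R t) Y ≤ 0 + ((1 - t) * dis R) / 2 + 0 := by
    apply ghDist_le_of_approx_subsets Φ
    · intro x
      exact ⟨x, mem_univ x, by simp⟩
    · intro y
      obtain ⟨x, hxy⟩ := hcorr.2 y
      exact ⟨⟨(⟨(x, y), hxy⟩ : ↥R), mem_univ _⟩, by simp [Φ]⟩
    · rintro ⟨p, -⟩ ⟨q, -⟩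
      have hd : dist (⟨p, mem_univ p⟩ : (univ : Set (Interp R t))) ⟨q, mem_univ q⟩
          = (1 - t) * dist (p : ↥R).val.1 (q : ↥R).val.1
            + t * dist (p : ↥R).val.2 (q : ↥R).val.2 := rfl
      rw [hd]
      have h := hdis (p : ↥R) (q : ↥R)
      have : (1 - t) * dist (p : ↥R).val.1 (q : ↥R).val.1
          + t * dist (p : ↥R).val.2 (q : ↥R).val.2
          - dist (Φ ⟨p, mem_univ p⟩) (Φ ⟨q, mem_univ q⟩)
          = (1 - t) * (dist (p : ↥R).val.1 (q : ↥R).val.1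
              - dist (p : ↥R).val.2 (q : ↥R).val.2) := by
        simp only [Φ]; ring
      rw [this, abs_mul, abs_of_nonneg ht1]
      exact mul_le_mul_of_nonneg_left h ht1
  calc ghDist (Interp R t) Y ≤ 0 + ((1 - t) * dis R) / 2 + 0 := key
    _ = ((1 - t) / 2) * dis R := by ring
end

section
/- Let R be a correspondence between compact metric spaces X and Y with dis(R) = 2·d_GH(X,Y). Define γ(0) = X, γ(1) = Y, and for t ∈ (0,1), γ(t) = (R, d_t) with d_t = (1−t)d_X + t d_Y. Then γ is a geodesic in the Gromov–Hausdorff (pseudo)metric: d_GH(γ(s),γ(t)) = |t−s|·d_GH(X,Y) for all s,t ∈ [0,1]. -/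
open Metric GromovHausdorff Set

variable {X Y : Type*} [MetricSpace X] [MetricSpace Y]

/-- The interpolating curve: `X` at `t ≤ 0`, `(R,d_t)` for `t ∈ (0,1)`, `Y` at `t ≥ 1`,
viewed in the Gromov–Hausdorff space. -/
noncomputable def ghGeodesic {X Y : Type*} [MetricSpace X] [MetricSpace Y]
    [CompactSpace X] [CompactSpace Y] [Nonempty X] [Nonempty Y]
    (R : Set (X × Y)) (hclosed : IsClosed R) (hne : R.Nonempty) : ℝ → GHSpace := fun t =>
  if h : t ∈ Set.Ioo (0:ℝ) 1 then
    @toGHSpace (Interp R t) (interpMetric R t h) (interpCompact hclosed h) (interpNonempty hne t)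
  else if t ≤ 0 then toGHSpace X else toGHSpace Y

theorem abs_dist_sub_le_dis {X Y : Type*} [MetricSpace X] [MetricSpace Y]
    [CompactSpace X] [CompactSpace Y] {R : Set (X × Y)} {p q : X × Y}
    (hp : p ∈ R) (hq : q ∈ R) :
    |dist p.1 q.1 - dist p.2 q.2| ≤ dis R := by
  apply le_csSup
  · refine ⟨Metric.diam (Set.univ : Set X) + Metric.diam (Set.univ : Set Y), ?_⟩
    rintro r ⟨⟨u, v⟩, ⟨hu, hv⟩, rfl⟩
    have h1 : dist u.1 v.1 ≤ Metric.diam (Set.univ : Set X) :=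
      Metric.dist_le_diam_of_mem isCompact_univ.isBounded (Set.mem_univ _) (Set.mem_univ _)
    have h2 : dist u.2 v.2 ≤ Metric.diam (Set.univ : Set Y) :=
      Metric.dist_le_diam_of_mem isCompact_univ.isBounded (Set.mem_univ _) (Set.mem_univ _)
    have h3 := dist_nonneg (x := u.1) (y := v.1)
    have h4 := dist_nonneg (x := u.2) (y := v.2)
    rw [abs_sub_le_iff]
    constructor <;> linarith
  · exact ⟨(p, q), Set.mem_prod.mpr ⟨hp, hq⟩, rfl⟩

theorem ghDist_interp_interp {X Y : Type*} [MetricSpace X] [MetricSpace Y]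
    [CompactSpace X] [CompactSpace Y] {R : Set (X × Y)}
    (hclosed : IsClosed R) (hne : R.Nonempty) {a b : ℝ}
    (ha : a ∈ Set.Ioo (0:ℝ) 1) (hb : b ∈ Set.Ioo (0:ℝ) 1) (hab : a ≤ b) :
    @ghDist (Interp R a) (Interp R b) (interpMetric R a ha) (interpNonempty hne a)
      (interpCompact hclosed ha) (interpMetric R b hb) (interpNonempty hne b)
      (interpCompact hclosed hb)
      ≤ (b - a) * dis R / 2 := by
  letI mA := interpMetric R a ha
  letI mB := interpMetric R b hb
  haveI := interpCompact hclosed ha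
  haveI := interpCompact hclosed hb
  haveI := interpNonempty hne a
  haveI := interpNonempty hne b
  set Φ : ↥(Set.univ : Set (Interp R a)) → Interp R b := fun p => (show Interp R b from p.1)
  have h1 : ∀ x : Interp R a, ∃ y ∈ (Set.univ : Set (Interp R a)), dist x y ≤ 0 :=
    fun x => ⟨x, Set.mem_univ x, le_of_eq (dist_self x)⟩
  have h2 : ∀ x : Interp R b, ∃ y : ↥(Set.univ : Set (Interp R a)), dist x (Φ y) ≤ 0 :=
    fun x => ⟨⟨show Interp R a from x, Set.mem_univ _⟩, le_of_eq (dist_self x)⟩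
  have h3 : ∀ p q : ↥(Set.univ : Set (Interp R a)),
      |dist p q - dist (Φ p) (Φ q)| ≤ (b - a) * dis R := by
    intro p q
    have hdp : dist p q = (1 - a) * dist (p.1 : ↥R).val.1 (q.1 : ↥R).val.1
        + a * dist (p.1 : ↥R).val.2 (q.1 : ↥R).val.2 := rfl
    have hdq : dist (Φ p) (Φ q) = (1 - b) * dist (p.1 : ↥R).val.1 (q.1 : ↥R).val.1
        + b * dist (p.1 : ↥R).val.2 (q.1 : ↥R).val.2 := rfl
    rw [hdp, hdq]
    have habs := abs_dist_sub_le_dis (p.1 : ↥R).2 (q.1 : ↥R).2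
    have heq : (1 - a) * dist (p.1 : ↥R).val.1 (q.1 : ↥R).val.1
        + a * dist (p.1 : ↥R).val.2 (q.1 : ↥R).val.2
        - ((1 - b) * dist (p.1 : ↥R).val.1 (q.1 : ↥R).val.1
        + b * dist (p.1 : ↥R).val.2 (q.1 : ↥R).val.2)
        = (b - a) * (dist (p.1 : ↥R).val.1 (q.1 : ↥R).val.1
          - dist (p.1 : ↥R).val.2 (q.1 : ↥R).val.2) := by ring
    rw [heq, abs_mul, abs_of_nonneg (by linarith : (0:ℝ) ≤ b - a)]
    exact mul_le_mul_of_nonneg_left habs (by linarith)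
  have key := ghDist_le_of_approx_subsets Φ h1 h2 h3
  linarith

theorem ghDist_interp_left {X Y : Type*} [MetricSpace X] [MetricSpace Y]
    [CompactSpace X] [CompactSpace Y] [Nonempty X] {R : Set (X × Y)}
    (hsurj : ∀ x : X, ∃ y : Y, (x, y) ∈ R)
    (hclosed : IsClosed R) (hne : R.Nonempty) {b : ℝ} (hb : b ∈ Set.Ioo (0:ℝ) 1) :
    @ghDist (Interp R b) X (interpMetric R b hb) (interpNonempty hne b) (interpCompact hclosed hb)
      _ _ _ ≤ b * dis R / 2 := by
  letI mB := interpMetric R b hb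
  haveI := interpCompact hclosed hb
  haveI := interpNonempty hne b
  set Φ : ↥(Set.univ : Set (Interp R b)) → X := fun p => (p.1 : ↥R).val.1
  have h1 : ∀ x : Interp R b, ∃ y ∈ (Set.univ : Set (Interp R b)), dist x y ≤ 0 :=
    fun x => ⟨x, Set.mem_univ x, le_of_eq (dist_self x)⟩
  have h2 : ∀ x : X, ∃ y : ↥(Set.univ : Set (Interp R b)), dist x (Φ y) ≤ 0 := by
    intro x
    obtain ⟨y, hy⟩ := hsurj x
    exact ⟨⟨show Interp R b from (⟨(x, y), hy⟩ : ↥R), Set.mem_univ _⟩, le_of_eq (dist_self x)⟩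
  have h3 : ∀ p q : ↥(Set.univ : Set (Interp R b)),
      |dist p q - dist (Φ p) (Φ q)| ≤ b * dis R := by
    intro p q
    have hdp : dist p q = (1 - b) * dist (p.1 : ↥R).val.1 (q.1 : ↥R).val.1
        + b * dist (p.1 : ↥R).val.2 (q.1 : ↥R).val.2 := rfl
    have hdq : dist (Φ p) (Φ q) = dist (p.1 : ↥R).val.1 (q.1 : ↥R).val.1 := rfl
    rw [hdp, hdq]
    have habs := abs_dist_sub_le_dis (p.1 : ↥R).2 (q.1 : ↥R).2
    rw [abs_sub_comm] at habs
    have heq : (1 - b) * dist (p.1 : ↥R).val.1 (q.1 : ↥R).val.1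
        + b * dist (p.1 : ↥R).val.2 (q.1 : ↥R).val.2
        - dist (p.1 : ↥R).val.1 (q.1 : ↥R).val.1
        = b * (dist (p.1 : ↥R).val.2 (q.1 : ↥R).val.2
          - dist (p.1 : ↥R).val.1 (q.1 : ↥R).val.1) := by ring
    rw [heq, abs_mul, abs_of_nonneg hb.1.le]
    exact mul_le_mul_of_nonneg_left habs hb.1.le
  have key := ghDist_le_of_approx_subsets Φ h1 h2 h3
  linarith

theorem ghDist_interp_right {X Y : Type*} [MetricSpace X] [MetricSpace Y]
    [CompactSpace X] [CompactSpace Y] [Nonempty Y] {R : Set (X × Y)}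
    (hsurj : ∀ y : Y, ∃ x : X, (x, y) ∈ R)
    (hclosed : IsClosed R) (hne : R.Nonempty) {a : ℝ} (ha : a ∈ Set.Ioo (0:ℝ) 1) :
    @ghDist (Interp R a) Y (interpMetric R a ha) (interpNonempty hne a) (interpCompact hclosed ha)
      _ _ _ ≤ (1 - a) * dis R / 2 := by
  letI mA := interpMetric R a ha
  haveI := interpCompact hclosed ha
  haveI := interpNonempty hne a
  set Φ : ↥(Set.univ : Set (Interp R a)) → Y := fun p => (p.1 : ↥R).val.2
  have h1 : ∀ x : Interp R a, ∃ y ∈ (Set.univ : Set (Interp R a)), dist x y ≤ 0 :=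
    fun x => ⟨x, Set.mem_univ x, le_of_eq (dist_self x)⟩
  have h2 : ∀ y : Y, ∃ z : ↥(Set.univ : Set (Interp R a)), dist y (Φ z) ≤ 0 := by
    intro y
    obtain ⟨x, hx⟩ := hsurj y
    exact ⟨⟨show Interp R a from (⟨(x, y), hx⟩ : ↥R), Set.mem_univ _⟩, le_of_eq (dist_self y)⟩
  have h3 : ∀ p q : ↥(Set.univ : Set (Interp R a)),
      |dist p q - dist (Φ p) (Φ q)| ≤ (1 - a) * dis R := by
    intro p q
    have hdp : dist p q = (1 - a) * dist (p.1 : ↥R).val.1 (q.1 : ↥R).val.1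
        + a * dist (p.1 : ↥R).val.2 (q.1 : ↥R).val.2 := rfl
    have hdq : dist (Φ p) (Φ q) = dist (p.1 : ↥R).val.2 (q.1 : ↥R).val.2 := rfl
    rw [hdp, hdq]
    have habs := abs_dist_sub_le_dis (p.1 : ↥R).2 (q.1 : ↥R).2
    have heq : (1 - a) * dist (p.1 : ↥R).val.1 (q.1 : ↥R).val.1
        + a * dist (p.1 : ↥R).val.2 (q.1 : ↥R).val.2
        - dist (p.1 : ↥R).val.2 (q.1 : ↥R).val.2
        = (1 - a) * (dist (p.1 : ↥R).val.1 (q.1 : ↥R).val.1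
          - dist (p.1 : ↥R).val.2 (q.1 : ↥R).val.2) := by ring
    rw [heq, abs_mul, abs_of_nonneg (by linarith [ha.2] : (0:ℝ) ≤ 1 - a)]
    exact mul_le_mul_of_nonneg_left habs (by linarith [ha.2])
  have key := ghDist_le_of_approx_subsets Φ h1 h2 h3
  linarith

theorem ghGeodesic_is_geodesic {X Y : Type*} [MetricSpace X] [MetricSpace Y]
    [CompactSpace X] [CompactSpace Y] [Nonempty X] [Nonempty Y]
    (R : Set (X × Y)) (hcorr : IsCorrespondence R) (hclosed : IsClosed R) (hne : R.Nonempty)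
    (hopt : dis R = 2 * ghDist X Y) :
    ∀ s ∈ Set.Icc (0:ℝ) 1, ∀ t ∈ Set.Icc (0:ℝ) 1,
      dist (ghGeodesic R hclosed hne s) (ghGeodesic R hclosed hne t)
        = |t - s| * ghDist X Y := by
  intro s hs t ht
  have hD : (0:ℝ) ≤ ghDist X Y := dist_nonneg
  have hg0 : ghGeodesic R hclosed hne 0 = toGHSpace X := by
    simp [ghGeodesic]
  have hg1 : ghGeodesic R hclosed hne 1 = toGHSpace Y := by
    norm_num [ghGeodesic]
  have ub : ∀ a ∈ Set.Icc (0:ℝ) 1, ∀ b ∈ Set.Icc (0:ℝ) 1, a ≤ b →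
      dist (ghGeodesic R hclosed hne a) (ghGeodesic R hclosed hne b) ≤ (b - a) * ghDist X Y := by
    intro a ha b hb hab
    rcases eq_or_lt_of_le hab with rfl | hlt
    · simp
    have hacase : a = 0 ∨ a ∈ Set.Ioo (0:ℝ) 1 := by
      rcases eq_or_lt_of_le ha.1 with h | h
      · exact Or.inl h.symm
      · exact Or.inr ⟨h, lt_of_lt_of_le hlt hb.2⟩
    have hbcase : b = 1 ∨ b ∈ Set.Ioo (0:ℝ) 1 := by
      rcases eq_or_lt_of_le hb.2 with h | h
      · exact Or.inl h
      · exact Or.inr ⟨lt_of_le_of_lt ha.1 hlt, h⟩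
    rcases hacase with rfl | haI <;> rcases hbcase with rfl | hbI
    · rw [hg0, hg1]
      have : dist (toGHSpace X) (toGHSpace Y) = ghDist X Y := rfl
      rw [this]; nlinarith
    · rw [hg0]
      have hgb : ghGeodesic R hclosed hne b =
          @toGHSpace (Interp R b) (interpMetric R b hbI) (interpCompact hclosed hbI)
            (interpNonempty hne b) := by
        simp only [ghGeodesic, dif_pos hbI]
      rw [hgb, dist_comm]
      have key := ghDist_interp_left hcorr.1 hclosed hne hbI
      rw [hopt] at key
      have : dist (@toGHSpace (Interp R b) (interpMetric R b hbI) (interpCompact hclosed hbI)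
          (interpNonempty hne b)) (toGHSpace X) =
          @ghDist (Interp R b) X (interpMetric R b hbI) (interpNonempty hne b)
            (interpCompact hclosed hbI) _ _ _ := rfl
      rw [this]; nlinarith
    · rw [hg1]
      have hga : ghGeodesic R hclosed hne a =
          @toGHSpace (Interp R a) (interpMetric R a haI) (interpCompact hclosed haI)
            (interpNonempty hne a) := by
        simp only [ghGeodesic, dif_pos haI]
      rw [hga]
      have key := ghDist_interp_right hcorr.2 hclosed hne haI
      rw [hopt] at key
      have : dist (@toGHSpace (Interp R a) (interpMetric R a haI) (interpCompact hclosed haI)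
          (interpNonempty hne a)) (toGHSpace Y) =
          @ghDist (Interp R a) Y (interpMetric R a haI) (interpNonempty hne a)
            (interpCompact hclosed haI) _ _ _ := rfl
      rw [this]; nlinarith
    · have hga : ghGeodesic R hclosed hne a =
          @toGHSpace (Interp R a) (interpMetric R a haI) (interpCompact hclosed haI)
            (interpNonempty hne a) := by
        simp only [ghGeodesic, dif_pos haI]
      have hgb : ghGeodesic R hclosed hne b =
          @toGHSpace (Interp R b) (interpMetric R b hbI) (interpCompact hclosed hbI)
            (interpNonempty hne b) := by
        simp only [ghGeodesic, dif_pos hbI]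
      rw [hga, hgb]
      have key := ghDist_interp_interp hclosed hne haI hbI hab
      rw [hopt] at key
      have : dist (@toGHSpace (Interp R a) (interpMetric R a haI) (interpCompact hclosed haI)
          (interpNonempty hne a))
          (@toGHSpace (Interp R b) (interpMetric R b hbI) (interpCompact hclosed hbI)
          (interpNonempty hne b)) =
          @ghDist (Interp R a) (Interp R b) (interpMetric R a haI) (interpNonempty hne a)
            (interpCompact hclosed haI) (interpMetric R b hbI)
            (interpNonempty hne b) (interpCompact hclosed hbI) := rfl
      rw [this]; nlinarith
  have main : ∀ a ∈ Set.Icc (0:ℝ) 1, ∀ b ∈ Set.Icc (0:ℝ) 1, a ≤ b →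
      dist (ghGeodesic R hclosed hne a) (ghGeodesic R hclosed hne b) = (b - a) * ghDist X Y := by
    intro a ha b hb hab
    have h01 : dist (ghGeodesic R hclosed hne 0) (ghGeodesic R hclosed hne 1) = ghDist X Y := by
      rw [hg0, hg1]; rfl
    have t1 := dist_triangle (ghGeodesic R hclosed hne 0) (ghGeodesic R hclosed hne a)
      (ghGeodesic R hclosed hne 1)
    have t2 := dist_triangle (ghGeodesic R hclosed hne a) (ghGeodesic R hclosed hne b)
      (ghGeodesic R hclosed hne 1)
    have u1 := ub 0 ⟨le_refl 0, zero_le_one⟩ a ha ha.1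
    have u2 := ub b hb 1 ⟨hb.1.trans hb.2, le_refl 1⟩ hb.2
    have u3 := ub a ha b hb hab
    linarith
  rcases le_total s t with h | h
  · rw [abs_of_nonneg (sub_nonneg.2 h)]
    exact main s hs t ht h
  · rw [dist_comm, abs_of_nonpos (sub_nonpos.2 h), ← neg_sub, neg_neg]
    exact main t ht s hs h
end

section
/- The space of isometry classes of compact metric spaces endowed with the Gromov–Hausdorff distance is a geodesic metric space: for any two classes [X], [Y], there exists a curve γ : [0,1] → M/∼ with γ(0) = [X], γ(1) = [Y], and d_GH(γ(s),γ(t)) = |t−s|·d_GH([X],[Y]) for all s,t. -/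
/-! An optimal correspondence `R ⊆ X × Y` has distortion `2 d_GH(X, Y)`. For `0 < t < 1` let
`R_t` be `R` with the metric `d_t = (1 - t) d_X + t d_Y`, and put `R_0 = X`, `R_1 = Y`, so that
`d_0 = d_X` and `d_1 = d_Y`. The identity of `R` (a projection, for `X` and `Y`) turns
`d_t`-distances into `d_s`-distances up to `|t - s|` times the distortion, hence
`d_GH(R_s, R_t) ≤ |t - s| d_GH(X, Y)`. Along such a path the triangle inequality forces all these
upper bounds to be equalities. -/

open GromovHausdorff Metric Set Function Bornology

section Geodesic

variable {M : Type*} [PseudoMetricSpace M]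

theorem dist_eq_abs_sub_mul_of_dist_le {p q : M} {γ : ℝ → M} (h0 : γ 0 = p) (h1 : γ 1 = q)
    (hγ : ∀ s ∈ Icc (0 : ℝ) 1, ∀ t ∈ Icc (0 : ℝ) 1, s ≤ t → dist (γ s) (γ t) ≤ (t - s) * dist p q)
    {s t : ℝ} (hs : s ∈ Icc (0 : ℝ) 1) (ht : t ∈ Icc (0 : ℝ) 1) :
    dist (γ s) (γ t) = |t - s| * dist p q := by
  wlog hst : s ≤ t generalizing s t
  · rw [dist_comm, abs_sub_comm]
    exact this ht hs (le_of_not_ge hst)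
  have hps := hγ 0 (left_mem_Icc.2 zero_le_one) s hs hs.1
  have htq := hγ t ht 1 (right_mem_Icc.2 zero_le_one) ht.2
  rw [h0] at hps
  rw [h1] at htq
  rw [abs_of_nonneg (sub_nonneg.2 hst)]
  refine (hγ s hs t ht hst).antisymm ?_
  nlinarith [dist_triangle4 p (γ s) (γ t) q]

theorem exists_geodesic_of_forall_Ioo (p q : M) (γ : Ioo (0 : ℝ) 1 → M)
    (hp : ∀ t, dist (γ t) p ≤ t * dist p q) (hq : ∀ t, dist (γ t) q ≤ (1 - t) * dist p q)
    (hγ : ∀ s t, dist (γ s) (γ t) ≤ |(t : ℝ) - s| * dist p q) :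
    ∃ Γ : ℝ → M, Γ 0 = p ∧ Γ 1 = q ∧
      ∀ s ∈ Icc (0 : ℝ) 1, ∀ t ∈ Icc (0 : ℝ) 1, dist (Γ s) (Γ t) = |t - s| * dist p q := by
  classical
  set Γ : ℝ → M := fun t => if h : t ∈ Ioo 0 1 then γ ⟨t, h⟩ else if t ≤ 0 then p else q
  have hΓ0 : Γ 0 = p := by simp [Γ]
  have hΓ1 : Γ 1 = q := by simp [Γ]
  have hΓ {t} (ht : t ∈ Ioo (0 : ℝ) 1) : Γ t = γ ⟨t, ht⟩ := dif_pos ht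
  have hpΓ : ∀ t ∈ Icc (0 : ℝ) 1, dist p (Γ t) ≤ t * dist p q := by
    intro t ht
    rcases eq_endpoints_or_mem_Ioo_of_mem_Icc ht with rfl | rfl | ht
    · simp [hΓ0]
    · simp [hΓ1]
    · rw [hΓ ht, dist_comm]
      exact hp ⟨t, ht⟩
  have hΓq : ∀ t ∈ Icc (0 : ℝ) 1, dist (Γ t) q ≤ (1 - t) * dist p q := by
    intro t ht
    rcases eq_endpoints_or_mem_Ioo_of_mem_Icc ht with rfl | rfl | ht
    · simp [hΓ0]
    · simp [hΓ1]
    · rw [hΓ ht]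
      exact hq ⟨t, ht⟩
  refine ⟨Γ, hΓ0, hΓ1, fun s hs t ht => dist_eq_abs_sub_mul_of_dist_le hΓ0 hΓ1 ?_ hs ht⟩
  intro s hs t ht hst
  rcases eq_endpoints_or_mem_Ioo_of_mem_Icc hs with rfl | rfl | hs'
  · simpa [hΓ0] using hpΓ t ht
  · simp [le_antisymm ht.2 hst]
  rcases eq_endpoints_or_mem_Ioo_of_mem_Icc ht with rfl | rfl | ht'
  · exact absurd hst (not_le.2 hs'.1)
  · simpa [hΓ1] using hΓq s hs
  · rw [hΓ hs', hΓ ht']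
    simpa [abs_of_nonneg (sub_nonneg.2 hst)] using hγ ⟨s, hs'⟩ ⟨t, ht'⟩

end Geodesic

theorem Metric.exists_dist_le_hausdorffDist {α : Type*} [PseudoMetricSpace α] {s t : Set α}
    {x : α} (hx : x ∈ s) (hs : IsBounded s) (ht : IsCompact t) (ht' : t.Nonempty) :
    ∃ y ∈ t, dist x y ≤ hausdorffDist s t := by
  obtain ⟨y, hy, hxy⟩ := ht.exists_infDist_eq_dist ht' x
  refine ⟨y, hy, hxy ▸ infDist_le_hausdorffDist_of_mem hx ?_⟩
  exact hausdorffEDist_ne_top_of_nonempty_of_bounded ⟨x, hx⟩ ht' hs ht.isBounded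

namespace GromovHausdorff

theorem ghDist_le_of_surjective {A B : Type*} [MetricSpace A] [CompactSpace A] [Nonempty A]
    [MetricSpace B] [CompactSpace B] [Nonempty B] (f : A → B) (hf : Surjective f) {ε : ℝ}
    (h : ∀ a b, |dist a b - dist (f a) (f b)| ≤ 2 * ε) : ghDist A B ≤ ε := by
  have := ghDist_le_of_approx_subsets (s := univ) (fun a => f a)
    (fun a => ⟨a, mem_univ a, (dist_self a).le⟩)
    (fun b => ⟨⟨(hf b).choose, mem_univ _⟩, by rw [(hf b).choose_spec, dist_self]⟩)
    (fun a b => h a b)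
  linarith

theorem exists_correspondence_ghDist (X Y : Type*) [MetricSpace X] [CompactSpace X] [Nonempty X]
    [MetricSpace Y] [CompactSpace Y] [Nonempty Y] :
    ∃ R : Set (X × Y), IsCompact R ∧ (∀ x, ∃ y, (x, y) ∈ R) ∧ (∀ y, ∃ x, (x, y) ∈ R) ∧
      ∀ a ∈ R, ∀ b ∈ R, |dist a.1 b.1 - dist a.2 b.2| ≤ 2 * ghDist X Y := by
  set Φ := optimalGHInjl X Y
  set Ψ := optimalGHInjr X Y
  have hΦ : IsCompact (range Φ) := isCompact_range (isometry_optimalGHInjl X Y).continuous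
  have hΨ : IsCompact (range Ψ) := isCompact_range (isometry_optimalGHInjr X Y).continuous
  refine ⟨{a | dist (Φ a.1) (Ψ a.2) ≤ ghDist X Y}, ?_, fun x => ?_, fun y => ?_, ?_⟩
  · refine (isClosed_le ?_ continuous_const).isCompact
    exact ((isometry_optimalGHInjl X Y).continuous.comp continuous_fst).dist
      ((isometry_optimalGHInjr X Y).continuous.comp continuous_snd)
  · obtain ⟨_, ⟨y, rfl⟩, hy⟩ :=
      exists_dist_le_hausdorffDist (mem_range_self x) hΦ.isBounded hΨ (range_nonempty Ψ)
    exact ⟨y, hausdorffDist_optimal (X := X) (Y := Y) ▸ hy⟩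
  · obtain ⟨_, ⟨x, rfl⟩, hx⟩ :=
      exists_dist_le_hausdorffDist (mem_range_self y) hΨ.isBounded hΦ (range_nonempty Φ)
    rw [hausdorffDist_comm, hausdorffDist_optimal, dist_comm] at hx
    exact ⟨x, hx⟩
  · intro a ha b hb
    rw [← (isometry_optimalGHInjl X Y).dist_eq, ← (isometry_optimalGHInjr X Y).dist_eq,
      ← Real.dist_eq, two_mul]
    calc _ ≤ dist (Φ a.1) (Ψ a.2) + dist (Φ b.1) (Ψ b.2) := dist_dist_dist_le _ _ _ _
      _ ≤ _ := add_le_add ha hb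

section Interpolation

variable {X Y : Type*} [MetricSpace X] [MetricSpace Y]

def weightedDist (t : ℝ) (a b : X × Y) : ℝ := (1 - t) * dist a.1 b.1 + t * dist a.2 b.2

theorem weightedDist_sub_weightedDist (s t : ℝ) (a b : X × Y) :
    weightedDist s a b - weightedDist t a b = (t - s) * (dist a.1 b.1 - dist a.2 b.2) := by
  unfold weightedDist; ring

theorem weightedDist_le_dist {t : ℝ} (ht₀ : 0 ≤ t) (ht₁ : t ≤ 1) (a b : X × Y) :
    weightedDist t a b ≤ dist a b := by
  rw [weightedDist, Prod.dist_eq]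
  nlinarith [le_max_left (dist a.1 b.1) (dist a.2 b.2), le_max_right (dist a.1 b.1) (dist a.2 b.2)]

/-- `R` with the metric `(1 - t) d_X + t d_Y`, which separates points only for `0 < t < 1`. -/
@[ext]
structure Interpolant (R : Set (X × Y)) (_t : Ioo (0 : ℝ) 1) where
  point : R

namespace Interpolant

variable {R : Set (X × Y)} {t : Ioo (0 : ℝ) 1}

noncomputable instance : MetricSpace (Interpolant R t) where
  dist a b := weightedDist t a.point.1 b.point.1
  dist_self a := by simp [weightedDist]
  dist_comm a b := by simp [weightedDist, dist_comm]
  dist_triangle a b c := by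
    obtain ⟨ht₀, ht₁⟩ := t.2
    simp only [weightedDist]
    nlinarith [dist_triangle a.point.1.1 b.point.1.1 c.point.1.1,
      dist_triangle a.point.1.2 b.point.1.2 c.point.1.2]
  eq_of_dist_eq_zero {a b} h := by
    obtain ⟨ht₀, ht₁⟩ := t.2
    have hx := @dist_nonneg _ _ a.point.1.1 b.point.1.1
    have hy := @dist_nonneg _ _ a.point.1.2 b.point.1.2
    simp only [weightedDist] at h
    refine Interpolant.ext (Subtype.ext (Prod.ext (dist_le_zero.1 ?_) (dist_le_zero.1 ?_))) <;>
      nlinarith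

theorem dist_eq (a b : Interpolant R t) : dist a b = weightedDist t a.point.1 b.point.1 := rfl

instance [CompactSpace R] : CompactSpace (Interpolant R t) :=
  have : LipschitzWith 1 (mk : R → Interpolant R t) := LipschitzWith.of_dist_le_mul fun a b => by
    rw [dist_eq, NNReal.coe_one, one_mul, Subtype.dist_eq]
    exact weightedDist_le_dist t.2.1.le t.2.2.le a.1 b.1
  Surjective.compactSpace this.continuous fun a => ⟨a.point, rfl⟩

instance [Nonempty R] : Nonempty (Interpolant R t) := ⟨⟨Classical.arbitrary R⟩⟩

end Interpolant

theorem ghDist_interpolant_le {R : Set (X × Y)} [CompactSpace R] [Nonempty R] {ε : ℝ}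
    (hR : ∀ a ∈ R, ∀ b ∈ R, |dist a.1 b.1 - dist a.2 b.2| ≤ 2 * ε)
    {Z : Type*} [MetricSpace Z] [CompactSpace Z] [Nonempty Z] (f : R → Z) (hf : Surjective f)
    (s : ℝ) (hfs : ∀ a b, dist (f a) (f b) = weightedDist s a.1 b.1) (t : Ioo (0 : ℝ) 1) :
    ghDist (Interpolant R t) Z ≤ |t - s| * ε := by
  refine ghDist_le_of_surjective (fun a : Interpolant R t => f a.point)
    (fun z => let ⟨a, ha⟩ := hf z; ⟨⟨a⟩, ha⟩) fun a b => ?_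
  rw [hfs, Interpolant.dist_eq, weightedDist_sub_weightedDist, abs_mul,
    abs_sub_comm s, mul_left_comm]
  exact mul_le_mul_of_nonneg_left (hR _ a.point.2 _ b.point.2) (abs_nonneg _)

end Interpolation

theorem exists_geodesic_toGHSpace (X Y : Type*) [MetricSpace X] [CompactSpace X] [Nonempty X]
    [MetricSpace Y] [CompactSpace Y] [Nonempty Y] :
    ∃ γ : ℝ → GHSpace, γ 0 = toGHSpace X ∧ γ 1 = toGHSpace Y ∧
      ∀ s ∈ Icc (0 : ℝ) 1, ∀ t ∈ Icc (0 : ℝ) 1,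
        dist (γ s) (γ t) = |t - s| * dist (toGHSpace X) (toGHSpace Y) := by
  obtain ⟨R, hRc, hfst, hsnd, hR⟩ := exists_correspondence_ghDist X Y
  have : CompactSpace R := isCompact_iff_compactSpace.1 hRc
  have : Nonempty R := let ⟨_, h⟩ := hfst (Classical.arbitrary X); ⟨⟨_, h⟩⟩
  refine exists_geodesic_of_forall_Ioo _ _ (fun t => toGHSpace (Interpolant R t))
    (fun t => ?_) (fun t => ?_) (fun s t => ?_)
  · refine (ghDist_interpolant_le hR (fun a => a.1.1)
      (fun x => let ⟨_, h⟩ := hfst x; ⟨⟨_, h⟩, rfl⟩) 0 (fun a b => ?_) t).trans_eq ?_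
    · simp [weightedDist]
    · rw [sub_zero, abs_of_pos t.2.1]; rfl
  · refine (ghDist_interpolant_le hR (fun a => a.1.2)
      (fun y => let ⟨_, h⟩ := hsnd y; ⟨⟨_, h⟩, rfl⟩) 1 (fun a b => ?_) t).trans_eq ?_
    · simp [weightedDist]
    · rw [abs_sub_comm, abs_of_pos (sub_pos.2 t.2.2)]; rfl
  · refine (ghDist_interpolant_le hR Interpolant.mk (fun a => ⟨a.point, rfl⟩) t
      (fun _ _ => rfl) s).trans_eq ?_
    rw [abs_sub_comm]; rfl

end GromovHausdorff

theorem ghSpace_geodesicSpace (p q : GHSpace) :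
    ∃ γ : ℝ → GHSpace, γ 0 = p ∧ γ 1 = q ∧
      ∀ s ∈ Set.Icc (0:ℝ) 1, ∀ t ∈ Set.Icc (0:ℝ) 1,
        dist (γ s) (γ t) = |t - s| * dist p q := by
  simpa only [GHSpace.toGHSpace_rep] using exists_geodesic_toGHSpace p.Rep q.Rep
end

section
/- For any correspondence R between compact metric spaces X and Y, the diagonal Δ = {(r,r) : r ∈ R} ⊆ R × R, viewed as a correspondence between (R,d_t) and (R,d_s), has distortion dis(Δ) = |t−s|·dis(R), for s,t ∈ (0,1). -/
open Metric GromovHausdorff Set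

variable {X Y : Type*} [MetricSpace X] [MetricSpace Y]

theorem dis_diagonal_eq {X Y : Type*} [MetricSpace X] [MetricSpace Y]
    [CompactSpace X] [CompactSpace Y] (R : Set (X × Y)) (hcorr : IsCorrespondence R)
    (hne : R.Nonempty) {s t : ℝ} (hs : s ∈ Set.Ioo (0:ℝ) 1) (ht : t ∈ Set.Ioo (0:ℝ) 1) :
    sSup ((fun pq : (X × Y) × (X × Y) =>
        |((1 - s) * dist pq.1.1 pq.2.1 + s * dist pq.1.2 pq.2.2)
          - ((1 - t) * dist pq.1.1 pq.2.1 + t * dist pq.1.2 pq.2.2)|) '' (R ×ˢ R))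
      = |t - s| * dis R := by
  have hfun : (fun pq : (X × Y) × (X × Y) =>
        |((1 - s) * dist pq.1.1 pq.2.1 + s * dist pq.1.2 pq.2.2)
          - ((1 - t) * dist pq.1.1 pq.2.1 + t * dist pq.1.2 pq.2.2)|)
      = (fun r => |t - s| * r) ∘ (fun pq : (X × Y) × (X × Y) =>
          |dist pq.1.1 pq.2.1 - dist pq.1.2 pq.2.2|) := by
    funext pq
    simp only [Function.comp_apply, ← abs_mul]
    ring_nf
  rw [hfun, Set.image_comp]
  have := Real.sSup_smul_of_nonneg (abs_nonneg (t - s))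
    ((fun pq : (X × Y) × (X × Y) => |dist pq.1.1 pq.2.1 - dist pq.1.2 pq.2.2|) '' (R ×ˢ R))
  rw [smul_eq_mul] at this
  rw [dis, ← this]
  congr 1
end

section
/- The interpolation construction at the endpoints is consistent: for a correspondence R between compact metric spaces X and Y with dis(R) = 2 d_GH(X,Y), the map t ↦ [(R,d_t)] for t ∈ (0,1), extended by [X] at t = 0 and [Y] at t = 1, is continuous from [0,1] into the Gromov–Hausdorff space; in particular [(R,d_t)] → [X] as t → 0⁺ and [(R,d_t)] → [Y] as t → 1⁻. -/
open Metric GromovHausdorff Set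

variable {X Y : Type*} [MetricSpace X] [MetricSpace Y]

private theorem ghDist_le_half {A : Type*} {B : Type*} [MetricSpace A] [CompactSpace A]
    [Nonempty A] [MetricSpace B] [CompactSpace B] [Nonempty B] (Φ : A → B)
    (hsurj : Function.Surjective Φ) {ε : ℝ}
    (H : ∀ p q : A, |dist p q - dist (Φ p) (Φ q)| ≤ ε) : ghDist A B ≤ ε / 2 := by
  have h := ghDist_le_of_approx_subsets (s := (Set.univ : Set A)) (fun p => Φ p)
    (ε₁ := 0) (ε₂ := ε) (ε₃ := 0) (fun x => ⟨x, Set.mem_univ x, by simp⟩)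
    (fun y => by
      obtain ⟨x, hx⟩ := hsurj y
      exact ⟨⟨x, Set.mem_univ x⟩, by simp [hx]⟩)
    (fun p q => by simpa [Subtype.dist_eq] using H p.val q.val)
  linarith

theorem ghGeodesic_continuous {X Y : Type*} [MetricSpace X] [MetricSpace Y]
    [CompactSpace X] [CompactSpace Y] [Nonempty X] [Nonempty Y]
    (R : Set (X × Y)) (hcorr : IsCorrespondence R) (hclosed : IsClosed R) (hne : R.Nonempty)
    (hopt : dis R = 2 * ghDist X Y) :
    ContinuousOn (ghGeodesic R hclosed hne) (Set.Icc (0:ℝ) 1) ∧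
    Filter.Tendsto (ghGeodesic R hclosed hne) (nhdsWithin 0 (Set.Ioi (0:ℝ)))
      (nhds (toGHSpace X)) ∧
    Filter.Tendsto (ghGeodesic R hclosed hne) (nhdsWithin 1 (Set.Iio (1:ℝ)))
      (nhds (toGHSpace Y)) := by
  classical
  set C : ℝ := Metric.diam (Set.univ : Set X) + Metric.diam (Set.univ : Set Y) with hCdef
  have hC : 0 ≤ C := add_nonneg Metric.diam_nonneg Metric.diam_nonneg
  set g := ghGeodesic R hclosed hne with hg
  -- basic values
  have hg0 : g 0 = toGHSpace X := by
    rw [hg, ghGeodesic]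
    rw [dif_neg (by simp [Set.mem_Ioo]), if_pos le_rfl]
  have hg1 : g 1 = toGHSpace Y := by
    rw [hg, ghGeodesic]
    rw [dif_neg (by simp [Set.mem_Ioo]), if_neg (by norm_num)]
  -- the fundamental distance bound on R × R
  have habs : ∀ p q : ↥R, |dist p.val.1 q.val.1 - dist p.val.2 q.val.2| ≤ C := by
    intro p q
    have h1 : dist p.val.1 q.val.1 ≤ Metric.diam (Set.univ : Set X) :=
      Metric.dist_le_diam_of_mem isCompact_univ.isBounded (Set.mem_univ _) (Set.mem_univ _)
    have h2 : dist p.val.2 q.val.2 ≤ Metric.diam (Set.univ : Set Y) :=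
      Metric.dist_le_diam_of_mem isCompact_univ.isBounded (Set.mem_univ _) (Set.mem_univ _)
    have h3 := @dist_nonneg X _ p.val.1 q.val.1
    have h4 := @dist_nonneg Y _ p.val.2 q.val.2
    rw [abs_le]; constructor <;> [nlinarith; nlinarith]
  -- fact 1 : interior Lipschitz bound
  have fact1 : ∀ s t : ℝ, ∀ hs : s ∈ Set.Ioo (0:ℝ) 1, ∀ ht : t ∈ Set.Ioo (0:ℝ) 1,
      dist (g s) (g t) ≤ |s - t| * C := by
    intro s t hs ht
    rw [hg, ghGeodesic, ghGeodesic, dif_pos hs, dif_pos ht]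
    letI mA := interpMetric R s hs
    letI mB := interpMetric R t ht
    haveI : CompactSpace (Interp R s) := interpCompact hclosed hs
    haveI : CompactSpace (Interp R t) := interpCompact hclosed ht
    haveI : Nonempty (Interp R s) := interpNonempty hne s
    haveI : Nonempty (Interp R t) := interpNonempty hne t
    have key : ghDist (Interp R s) (Interp R t) ≤ (|s - t| * (2 * C)) / 2 := by
      refine ghDist_le_half (A := Interp R s) (B := Interp R t) (fun p => p) (fun p => ⟨p, rfl⟩) ?_
      intro p q
      have e1 : dist p q = (1 - s) * dist (p : ↥R).val.1 (q : ↥R).val.1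
          + s * dist (p : ↥R).val.2 (q : ↥R).val.2 := rfl
      have e2 : @dist (Interp R t) mB.toDist p q
          = (1 - t) * dist (p : ↥R).val.1 (q : ↥R).val.1
          + t * dist (p : ↥R).val.2 (q : ↥R).val.2 := rfl
      show |@dist (Interp R s) mA.toDist p q - @dist (Interp R t) mB.toDist p q|
          ≤ |s - t| * (2 * C)
      rw [e1, e2]
      have hab := habs (p : ↥R) (q : ↥R)
      set a := dist (p : ↥R).val.1 (q : ↥R).val.1
      set b := dist (p : ↥R).val.2 (q : ↥R).val.2
      have : (1 - s) * a + s * b - ((1 - t) * a + t * b) = (t - s) * (a - b) := by ring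
      rw [this, abs_mul]
      have h5 : |t - s| = |s - t| := abs_sub_comm t s
      rw [h5]
      nlinarith [abs_nonneg (s - t), abs_nonneg (a - b)]
    calc dist (toGHSpace (Interp R s)) (toGHSpace (Interp R t))
        ≤ (|s - t| * (2 * C)) / 2 := key
      _ = |s - t| * C := by ring
  -- fact 2 : distance to X
  have fact2 : ∀ t : ℝ, ∀ ht : t ∈ Set.Ioo (0:ℝ) 1, dist (g 0) (g t) ≤ t * C := by
    intro t ht
    rw [hg0, hg, ghGeodesic, dif_pos ht]
    letI mB := interpMetric R t ht
    haveI : CompactSpace (Interp R t) := interpCompact hclosed ht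
    haveI : Nonempty (Interp R t) := interpNonempty hne t
    rw [dist_comm]
    have key : ghDist (Interp R t) X ≤ (t * (2 * C)) / 2 := by
      refine ghDist_le_half (A := Interp R t) (B := X) (fun p => (p : ↥R).val.1) ?_ ?_
      · intro x
        obtain ⟨y, hy⟩ := hcorr.1 x
        exact ⟨(⟨(x, y), hy⟩ : ↥R), rfl⟩
      · intro p q
        have e1 : dist p q = (1 - t) * dist (p : ↥R).val.1 (q : ↥R).val.1
            + t * dist (p : ↥R).val.2 (q : ↥R).val.2 := rfl
        rw [e1]
        have hab := habs (p : ↥R) (q : ↥R)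
        set a := dist (p : ↥R).val.1 (q : ↥R).val.1
        set b := dist (p : ↥R).val.2 (q : ↥R).val.2
        have : (1 - t) * a + t * b - a = t * (b - a) := by ring
        rw [this, abs_mul, abs_of_pos ht.1, abs_sub_comm b a]
        nlinarith [ht.1.le, abs_nonneg (a - b)]
    calc dist (toGHSpace (Interp R t)) (toGHSpace X) ≤ (t * (2 * C)) / 2 := key
      _ = t * C := by ring
  -- fact 3 : distance to Y
  have fact3 : ∀ t : ℝ, ∀ ht : t ∈ Set.Ioo (0:ℝ) 1, dist (g t) (g 1) ≤ (1 - t) * C := by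
    intro t ht
    rw [hg1, hg, ghGeodesic, dif_pos ht]
    letI mB := interpMetric R t ht
    haveI : CompactSpace (Interp R t) := interpCompact hclosed ht
    haveI : Nonempty (Interp R t) := interpNonempty hne t
    have key : ghDist (Interp R t) Y ≤ ((1 - t) * (2 * C)) / 2 := by
      refine ghDist_le_half (A := Interp R t) (B := Y) (fun p => (p : ↥R).val.2) ?_ ?_
      · intro y
        obtain ⟨x, hx⟩ := hcorr.2 y
        exact ⟨(⟨(x, y), hx⟩ : ↥R), rfl⟩
      · intro p q
        have e1 : dist p q = (1 - t) * dist (p : ↥R).val.1 (q : ↥R).val.1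
            + t * dist (p : ↥R).val.2 (q : ↥R).val.2 := rfl
        rw [e1]
        have hab := habs (p : ↥R) (q : ↥R)
        set a := dist (p : ↥R).val.1 (q : ↥R).val.1
        set b := dist (p : ↥R).val.2 (q : ↥R).val.2
        have : (1 - t) * a + t * b - b = (1 - t) * (a - b) := by ring
        rw [this, abs_mul, abs_of_pos (by linarith [ht.2] : (0:ℝ) < 1 - t)]
        nlinarith [ht.2.le, abs_nonneg (a - b)]
    calc dist (toGHSpace (Interp R t)) (toGHSpace Y) ≤ ((1 - t) * (2 * C)) / 2 := key
      _ = (1 - t) * C := by ring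
  -- fact 4 : endpoints
  have fact4 : dist (g 0) (g 1) ≤ C := by
    have hhalf : (1/2 : ℝ) ∈ Set.Ioo (0:ℝ) 1 := by norm_num
    calc dist (g 0) (g 1) ≤ dist (g 0) (g (1/2)) + dist (g (1/2)) (g 1) := dist_triangle _ _ _
      _ ≤ (1/2) * C + (1 - 1/2) * C := add_le_add (fact2 _ hhalf) (fact3 _ hhalf)
      _ = C := by ring
  -- the global Lipschitz-type bound over [0,1]
  have key : ∀ s ∈ Set.Icc (0:ℝ) 1, ∀ t ∈ Set.Icc (0:ℝ) 1,
      dist (g s) (g t) ≤ |s - t| * C := by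
    have trich : ∀ s ∈ Set.Icc (0:ℝ) 1, s = 0 ∨ s = 1 ∨ s ∈ Set.Ioo (0:ℝ) 1 := by
      intro s hs
      rcases eq_or_lt_of_le hs.1 with h0 | h0
      · exact Or.inl h0.symm
      rcases eq_or_lt_of_le hs.2 with h1 | h1
      · exact Or.inr (Or.inl h1)
      · exact Or.inr (Or.inr ⟨h0, h1⟩)
    intro s hs t ht
    rcases trich s hs with rfl | rfl | hsI <;> rcases trich t ht with rfl | rfl | htI
    · simp
    · simpa using fact4
    · calc dist (g 0) (g t) ≤ t * C := fact2 t htI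
        _ = |0 - t| * C := by rw [abs_sub_comm]; rw [sub_zero, abs_of_pos htI.1]
    · rw [dist_comm]
      simpa [abs_sub_comm] using fact4
    · simp
    · rw [dist_comm]
      calc dist (g t) (g 1) ≤ (1 - t) * C := fact3 t htI
        _ = |1 - t| * C := by rw [abs_of_pos (by linarith [htI.2])]
    · rw [dist_comm]
      calc dist (g 0) (g s) ≤ s * C := fact2 s hsI
        _ = |s - 0| * C := by rw [sub_zero, abs_of_pos hsI.1]
    · calc dist (g s) (g 1) ≤ (1 - s) * C := fact3 s hsI
        _ = |s - 1| * C := by rw [abs_sub_comm, abs_of_pos (by linarith [hsI.2])]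
    · exact fact1 s t hsI htI
  refine ⟨?_, ?_, ?_⟩
  · -- continuity on [0,1]
    refine LipschitzOnWith.continuousOn (K := Real.toNNReal C)
      (LipschitzOnWith.of_dist_le_mul ?_)
    intro x hx y hy
    rw [Real.coe_toNNReal _ hC, Real.dist_eq]
    calc dist (g x) (g y) ≤ |x - y| * C := key x hx y hy
      _ = C * |x - y| := mul_comm _ _
  · -- limit at 0⁺
    rw [Metric.tendsto_nhds]
    intro ε hε
    have hδ : (0:ℝ) < min 1 (ε / (C + 1)) := lt_min one_pos (div_pos hε (by linarith))
    filter_upwards [Ioo_mem_nhdsGT hδ] with t ht'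
    have htI : t ∈ Set.Ioo (0:ℝ) 1 := ⟨ht'.1, lt_of_lt_of_le ht'.2 (min_le_left _ _)⟩
    rw [← hg0, dist_comm]
    calc dist (g 0) (g t) ≤ t * C := fact2 t htI
      _ ≤ t * (C + 1) := by nlinarith [htI.1.le]
      _ < (ε / (C + 1)) * (C + 1) := by
          have := lt_of_lt_of_le ht'.2 (min_le_right _ _)
          nlinarith
      _ = ε := by field_simp
  · -- limit at 1⁻
    rw [Metric.tendsto_nhds]
    intro ε hε
    have hδ : max 0 (1 - ε / (C + 1)) < 1 := by
      apply max_lt one_pos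
      have : 0 < ε / (C + 1) := div_pos hε (by linarith)
      linarith
    filter_upwards [Ioo_mem_nhdsLT hδ] with t ht'
    have htI : t ∈ Set.Ioo (0:ℝ) 1 := ⟨lt_of_le_of_lt (le_max_left _ _) ht'.1, ht'.2⟩
    rw [← hg1]
    calc dist (g t) (g 1) ≤ (1 - t) * C := fact3 t htI
      _ ≤ (1 - t) * (C + 1) := by nlinarith [htI.2.le]
      _ < (ε / (C + 1)) * (C + 1) := by
          have h2 : 1 - ε / (C + 1) < t := lt_of_le_of_lt (le_max_right _ _) ht'.1
          nlinarith
      _ = ε := by field_simp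
end
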